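/- Let G be a graph of treewidth at most k and let T be a rooted tree decomposition of G whose root bag B_r satisfies |B_r| > 2(k+1). Then there is a partition (C_1, C_2, C_3, S) of V(G) with |S| ≤ k+1, no edge between distinct C_i's, and |C_i ∩ B_r| + |S| < |B_r| for every i ∈ {1,2,3}. -/
import Mathlib

set_option linter.unusedSectionVars false
set_option maxHeartbeats 1000000


open SimpleGraph

/-- A rooted tree decomposition of a graph `G` with node type `ι`. -/
structure RootedTD (V : Type) (G : SimpleGraph V) (ι : Type) where
  T : SimpleGraph ι
  tree : T.IsTree
  bag : ι → Finset V
  root : ι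
  parent : ι → ι
  parent_root : parent root = root
  parent_adj : ∀ x, x ≠ root → T.Adj x (parent x)
  parent_reach : ∀ x, ∃ n, parent^[n] x = root
  vert_cover : ∀ v, ∃ x, v ∈ bag x
  edge_cover : ∀ ⦃u v⦄, G.Adj u v → ∃ x, u ∈ bag x ∧ v ∈ bag x
  conn : ∀ (v : V) (x y : ι) (w : T.Walk x y), w.IsPath →
      v ∈ bag x → v ∈ bag y → ∀ z ∈ w.support, v ∈ bag z

/-- The treewidth of G is at most k. -/
def treewidthLE (V : Type) (G : SimpleGraph V) (k : ℕ) : Prop :=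
  ∃ (m : ℕ) (D : RootedTD V G (Fin m)), ∀ x, (D.bag x).card ≤ k + 1

namespace RootedTD

variable {V : Type} {G : SimpleGraph V} {J : Type} [Fintype J] [DecidableEq J]

/-- `y` is a descendant of `c` (weakly). -/
def desc (E : RootedTD V G J) (c y : J) : Prop := ∃ n, E.parent^[n] y = c

lemma desc_self (E : RootedTD V G J) (c : J) : E.desc c c := ⟨0, rfl⟩

lemma desc_trans_parent {E : RootedTD V G J} {c y : J} (h : E.desc c y) :
    E.desc (E.parent c) y := by
  obtain ⟨n, hn⟩ := h
  exact ⟨n + 1, by rw [Function.iterate_succ_apply', hn]⟩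

lemma no2cycle (E : RootedTD V G J) {u v : J} (h1 : u ≠ v)
    (h2 : E.parent u = v) (h3 : E.parent v = u) : False := by
  have key : ∀ n, E.parent^[n] u = u ∨ E.parent^[n] u = v := by
    intro n
    induction n with
    | zero => exact Or.inl rfl
    | succ n ih =>
      rcases ih with h | h <;> rw [Function.iterate_succ_apply', h]
      · exact Or.inr h2
      · exact Or.inl h3
  obtain ⟨N, hN⟩ := E.parent_reach u
  rcases key N with h | h
  · -- root = u
    have hu : u = E.root := by rw [← hN, h]
    have := E.parent_root
    rw [← hu, h2] at this
    exact h1 this.symm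
  · have hv : v = E.root := by rw [← hN, h]
    have := E.parent_root
    rw [← hv, h3] at this
    exact h1 this

lemma parent_or (E : RootedTD V G J) {u v : J} (h : E.T.Adj u v) :
    E.parent u = v ∨ E.parent v = u := by
  classical
  have : Fintype E.T.edgeSet := Fintype.ofFinite _
  set F : Finset J := Finset.univ.erase E.root with hF
  have hinj : Set.InjOn (fun y => s(y, E.parent y)) F := by
    intro a ha b hb hab
    simp only [Sym2.eq, Sym2.rel_iff', Prod.mk.injEq, Prod.swap_prod_mk] at hab
    rcases hab with ⟨h1, _⟩ | ⟨h1, h2⟩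
    · exact h1
    · by_contra hne
      exact E.no2cycle hne h2 h1.symm
  have hsub : F.image (fun y => s(y, E.parent y)) ⊆ E.T.edgeFinset := by
    intro e he
    simp only [Finset.mem_image] at he
    obtain ⟨y, hy, rfl⟩ := he
    rw [mem_edgeFinset, mem_edgeSet]
    exact E.parent_adj y (Finset.ne_of_mem_erase hy)
  have hcard : (F.image (fun y => s(y, E.parent y))).card = F.card :=
    Finset.card_image_of_injOn hinj
  have hFcard : F.card = Fintype.card J - 1 := by
    rw [hF, Finset.card_erase_of_mem (Finset.mem_univ _), Finset.card_univ]
  have hedge : E.T.edgeFinset.card + 1 = Fintype.card J := E.tree.card_edgeFinset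
  have heq : F.image (fun y => s(y, E.parent y)) = E.T.edgeFinset := by
    apply Finset.eq_of_subset_of_card_le hsub
    rw [hcard, hFcard]
    omega
  have hmem : s(u, v) ∈ E.T.edgeFinset := by
    rw [mem_edgeFinset, mem_edgeSet]; exact h
  rw [← heq] at hmem
  simp only [Finset.mem_image] at hmem
  obtain ⟨y, _, hy⟩ := hmem
  simp only [Sym2.eq, Sym2.rel_iff', Prod.mk.injEq, Prod.swap_prod_mk] at hy
  rcases hy with ⟨rfl, h2⟩ | ⟨h1, h2⟩
  · exact Or.inl h2
  · exact Or.inr (h1 ▸ h2)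


noncomputable def depth (E : RootedTD V G J) (y : J) : ℕ := Nat.find (E.parent_reach y)

lemma depth_spec (E : RootedTD V G J) (y : J) : E.parent^[E.depth y] y = E.root :=
  Nat.find_spec (E.parent_reach y)

lemma depth_parent (E : RootedTD V G J) {y : J} (h : y ≠ E.root) :
    E.depth y = E.depth (E.parent y) + 1 := by
  have h1 : E.parent^[E.depth (E.parent y) + 1] y = E.root := by
    rw [Function.iterate_succ_apply]; exact E.depth_spec _
  have h2 : E.depth y ≤ E.depth (E.parent y) + 1 := Nat.find_le h1
  have h3 : 1 ≤ E.depth y := by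
    rcases Nat.eq_zero_or_pos (E.depth y) with h0 | h0
    · exact absurd (by simpa [h0] using E.depth_spec y) h
    · exact h0
  have h4 : E.parent^[E.depth y - 1] (E.parent y) = E.root := by
    rw [← Function.iterate_succ_apply, Nat.succ_eq_add_one, Nat.sub_add_cancel h3]
    exact E.depth_spec y
  have h5 : E.depth (E.parent y) ≤ E.depth y - 1 := Nat.find_le h4
  omega

lemma depth_parent_le (E : RootedTD V G J) (y : J) : E.depth (E.parent y) ≤ E.depth y := by
  by_cases h : y = E.root
  · subst h; rw [E.parent_root]
  · rw [E.depth_parent h]; omega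

lemma depth_iterate_le (E : RootedTD V G J) (y : J) (j : ℕ) :
    E.depth (E.parent^[j] y) ≤ E.depth y := by
  induction j with
  | zero => rfl
  | succ j ih =>
    rw [Function.iterate_succ_apply']
    exact le_trans (E.depth_parent_le _) ih

/-- a child of x -/
lemma depth_child (E : RootedTD V G J) {c x : J} (h1 : E.parent c = x) (h2 : c ≠ x) :
    E.depth c = E.depth x + 1 := by
  have hc : c ≠ E.root := by
    intro h; rw [h, E.parent_root] at h1; exact h2 (h.trans h1)
  rw [E.depth_parent hc, h1]

lemma desc_child_disjoint (E : RootedTD V G J) {c c' x : J}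
    (h1 : E.parent c = x) (h2 : c ≠ x) (h1' : E.parent c' = x) (h2' : c' ≠ x)
    (hcc : c ≠ c') {y : J} (hy : E.desc c y) (hy' : E.desc c' y) : False := by
  obtain ⟨n, hn⟩ := hy
  obtain ⟨n', hn'⟩ := hy'
  rcases le_total n n' with h | h
  · have key : E.parent^[n' - n] c = c' := by
      rw [← hn, ← Function.iterate_add_apply, Nat.sub_add_cancel h, hn']
    rcases Nat.eq_zero_or_pos (n' - n) with h0 | h0
    · rw [h0] at key; exact hcc key
    · obtain ⟨j, hj⟩ : ∃ j, n' - n = j + 1 := ⟨n' - n - 1, by omega⟩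
      rw [hj, Function.iterate_succ_apply, h1] at key
      have hd : E.depth c' ≤ E.depth x := key ▸ E.depth_iterate_le x _
      rw [E.depth_child h1' h2'] at hd; omega
  · have key : E.parent^[n - n'] c' = c := by
      rw [← hn', ← Function.iterate_add_apply, Nat.sub_add_cancel h, hn]
    rcases Nat.eq_zero_or_pos (n - n') with h0 | h0
    · rw [h0] at key; exact hcc key.symm
    · obtain ⟨j, hj⟩ : ∃ j, n - n' = j + 1 := ⟨n - n' - 1, by omega⟩
      rw [hj, Function.iterate_succ_apply, h1'] at key
      have hd : E.depth c ≤ E.depth x := key ▸ E.depth_iterate_le x _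
      rw [E.depth_child h1 h2] at hd; omega

lemma cross2 (E : RootedTD V G J) {c : J} :
    ∀ {y z : J} (w : E.T.Walk y z), E.desc c y → ¬ E.desc c z →
      c ∈ w.support ∧ E.parent c ∈ w.support := by
  intro y z w
  induction w with
  | nil => intro hy hz; exact absurd hy hz
  | @cons a b d h w ih =>
    intro hy hz
    by_cases hyc : a = c
    · by_cases hb : E.desc c b
      · obtain ⟨h1, h2⟩ := ih hb hz
        exact ⟨by simp [Walk.support_cons, h1], by simp [Walk.support_cons, h2]⟩
      · rcases E.parent_or h with hp | hp
        · refine ⟨?_, ?_⟩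
          · rw [← hyc]; exact Walk.start_mem_support _
          · rw [← hyc, hp]
            simp [Walk.support_cons, Walk.start_mem_support]
        · exact absurd ⟨1, by simp [hp, hyc]⟩ hb
    · have hb : E.desc c b := by
        obtain ⟨n, hn⟩ := hy
        rcases Nat.eq_zero_or_pos n with h0 | h0
        · rw [h0] at hn; exact absurd hn hyc
        · rcases E.parent_or h with hp | hp
          · refine ⟨n - 1, ?_⟩
            have : n = (n - 1) + 1 := by omega
            rw [this, Function.iterate_succ_apply, hp] at hn
            exact hn
          · exact ⟨n + 1, by rw [Function.iterate_succ_apply, hp, hn]⟩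
      obtain ⟨h1, h2⟩ := ih hb hz
      exact ⟨by simp [Walk.support_cons, h1], by simp [Walk.support_cons, h2]⟩

lemma sep (E : RootedTD V G J) {c y z : J} {v : V} (hy : E.desc c y) (hz : ¬ E.desc c z)
    (hvy : v ∈ E.bag y) (hvz : v ∈ E.bag z) : v ∈ E.bag c ∧ v ∈ E.bag (E.parent c) := by
  obtain ⟨w⟩ := E.tree.isConnected.preconnected y z
  set p := w.toPath with hp
  obtain ⟨h1, h2⟩ := E.cross2 p.1 hy hz
  exact ⟨E.conn v y z p.1 p.2 hvy hvz c h1, E.conn v y z p.1 p.2 hvy hvz _ h2⟩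


end RootedTD

lemma bins3 {α : Type} [DecidableEq α] (wt : α → ℕ) (Bd : ℕ) (s : Finset α)
    (h1 : ∀ a ∈ s, 2 * wt a ≤ Bd) (h2 : ∑ a ∈ s, wt a ≤ Bd) :
    ∃ t0 t1 t2 : Finset α, t0 ∪ t1 ∪ t2 = s ∧ Disjoint t0 t1 ∧ Disjoint t0 t2 ∧
      Disjoint t1 t2 ∧
      2 * ∑ a ∈ t0, wt a ≤ Bd ∧ 2 * ∑ a ∈ t1, wt a ≤ Bd ∧ 2 * ∑ a ∈ t2, wt a ≤ Bd := by
  rcases s.eq_empty_or_nonempty with rfl | hs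
  · exact ⟨∅, ∅, ∅, by simp, by simp, by simp, by simp, by simp, by simp, by simp⟩
  obtain ⟨a₀, ha₀, hmax⟩ := s.exists_max_image wt hs
  set s' := s.erase a₀ with hs'
  have hins : insert a₀ s' = s := Finset.insert_erase ha₀
  have hsumtot : ∑ a ∈ s', wt a + wt a₀ ≤ Bd := by
    have : ∑ a ∈ insert a₀ s', wt a = wt a₀ + ∑ a ∈ s', wt a :=
      Finset.sum_insert (Finset.notMem_erase _ _)
    rw [hins] at this
    omega
  have key : ∀ t : Finset α, t ⊆ s' → ∃ t1 t2 : Finset α, t1 ∪ t2 = t ∧ Disjoint t1 t2 ∧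
      2 * ∑ a ∈ t1, wt a ≤ Bd ∧ 2 * ∑ a ∈ t2, wt a ≤ Bd := by
    intro t
    induction t using Finset.induction_on with
    | empty => intro _; exact ⟨∅, ∅, by simp, by simp, by simp, by simp⟩
    | @insert a t ha ih =>
      intro hsub
      have hts : t ⊆ s' := (Finset.subset_insert a t).trans hsub
      obtain ⟨t1, t2, hu, hd, hb1, hb2⟩ := ih hts
      have hat : a ∉ t1 ∧ a ∉ t2 := by
        constructor <;> intro hmem <;> apply ha <;> rw [← hu]
        · exact Finset.mem_union_left _ hmem
        · exact Finset.mem_union_right _ hmem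
      have hsum : ∑ b ∈ t, wt b + wt a + wt a₀ ≤ Bd := by
        have hx : ∑ b ∈ insert a t, wt b ≤ ∑ b ∈ s', wt b :=
          Finset.sum_le_sum_of_subset hsub
        rw [Finset.sum_insert ha] at hx
        omega
      have hwa : wt a ≤ wt a₀ :=
        hmax a (Finset.erase_subset _ _ (hsub (Finset.mem_insert_self a t)))
      have hsplit : ∑ b ∈ t1, wt b + ∑ b ∈ t2, wt b = ∑ b ∈ t, wt b := by
        rw [← hu, Finset.sum_union hd]
      rcases le_total (∑ b ∈ t1, wt b) (∑ b ∈ t2, wt b) with hle | hle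
      · refine ⟨insert a t1, t2, ?_, ?_, ?_, hb2⟩
        · rw [Finset.insert_union, hu]
        · rw [Finset.disjoint_insert_left]; exact ⟨hat.2, hd⟩
        · rw [Finset.sum_insert hat.1]; omega
      · refine ⟨t1, insert a t2, ?_, ?_, hb1, ?_⟩
        · rw [Finset.union_insert, hu]
        · rw [Finset.disjoint_insert_right]; exact ⟨hat.1, hd⟩
        · rw [Finset.sum_insert hat.2]; omega
  obtain ⟨t1, t2, hu, hd, hb1, hb2⟩ := key s' (le_refl _)
  refine ⟨{a₀}, t1, t2, ?_, ?_, ?_, hd, ?_, hb1, hb2⟩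
  · rw [Finset.union_assoc, hu]
    rw [show ({a₀} : Finset α) ∪ s' = insert a₀ s' from by ext b; simp [or_comm]]
    exact hins
  · rw [Finset.disjoint_singleton_left]
    intro hmem
    exact Finset.notMem_erase a₀ s (hs' ▸ hu ▸ Finset.mem_union_left t2 hmem)
  · rw [Finset.disjoint_singleton_left]
    intro hmem
    exact Finset.notMem_erase a₀ s (hs' ▸ hu ▸ Finset.mem_union_right t1 hmem)
  · rw [Finset.sum_singleton]; exact h1 a₀ ha₀

/-- if G has treewidth at most k and the root bag of a rooted tree
decomposition has size more than 2(k+1), then there is a legal partition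
(C 1, C 2, C 3, S) of V with |S| ≤ k+1 and |C i ∩ B_r| + |S| < |B_r| for all i. -/
theorem stmt5 {V ι : Type} [Fintype V] [DecidableEq V] (G : SimpleGraph V) (k : ℕ)
    (htw : treewidthLE V G k) (D : RootedTD V G ι)
    (hr : 2 * (k + 1) < (D.bag D.root).card) :
    ∃ (C : Fin 3 → Set V) (S : Set V), S.ncard ≤ k + 1 ∧
      (∀ i j, i ≠ j → Disjoint (C i) (C j)) ∧
      (∀ i, Disjoint (C i) S) ∧
      (S ∪ ⋃ i, C i) = Set.univ ∧
      (∀ i j, i ≠ j → ∀ u ∈ C i, ∀ v ∈ C j, ¬ G.Adj u v) ∧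
      ∀ i, (C i ∩ (D.bag D.root : Set V)).ncard + S.ncard < (D.bag D.root).card := by
  classical
  obtain ⟨m, E, hE⟩ := htw
  set B : Finset V := D.bag D.root with hB
  -- weight of the subtree below y
  set w : Fin m → ℕ := fun y => (B.filter (fun v => ∃ z, E.desc y z ∧ v ∈ E.bag z)).card
    with hw
  have hwroot : w E.root = B.card := by
    have h : B.filter (fun v => ∃ z, E.desc E.root z ∧ v ∈ E.bag z) = B :=
      Finset.filter_true_of_mem (fun v _ => by
        obtain ⟨z, hz⟩ := E.vert_cover v
        exact ⟨z, E.parent_reach z, hz⟩)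
    rw [hw]
    exact congrArg Finset.card h
  have hBpos : 0 < B.card := by omega
  set cand : Finset (Fin m) := Finset.univ.filter (fun y : Fin m => B.card < 2 * w y)
    with hcand
  have hrootcand : E.root ∈ cand := by
    rw [hcand, Finset.mem_filter]
    exact ⟨Finset.mem_univ _, by rw [hwroot]; omega⟩
  obtain ⟨x, hx, hxmax⟩ := cand.exists_max_image E.depth ⟨_, hrootcand⟩
  have hxw : B.card < 2 * w x := (Finset.mem_filter.1 hx).2
  have hchild : ∀ c : Fin m, E.parent c = x → c ≠ x → 2 * w c ≤ B.card := by
    intro c h1 h2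
    by_contra hlt
    push_neg at hlt
    have hc : c ∈ cand := by
      rw [hcand, Finset.mem_filter]; exact ⟨Finset.mem_univ _, hlt⟩
    have hd := hxmax c hc
    rw [E.depth_child h1 h2] at hd
    omega
  -- the separator and the branch pieces
  set S : Set V := ↑(E.bag x) with hS
  let K := {c : Fin m // E.parent c = x ∧ c ≠ x}
  let Aup : Set V := {v | (∃ z, ¬ E.desc x z ∧ v ∈ E.bag z) ∧ v ∉ E.bag x}
  let Ac : K → Set V := fun c => {v | (∃ z, E.desc c.1 z ∧ v ∈ E.bag z) ∧ v ∉ E.bag x}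
  let Aset : Option K → Set V := fun i => i.elim Aup Ac
  have hAnotbag : ∀ (i : Option K) (v : V), v ∈ Aset i → v ∉ E.bag x := by
    rintro (_ | c) v hv <;> exact hv.2
  -- pairwise disjointness of pieces
  have hsome : ∀ (c : K) (j : Option K), j ≠ some c →
      ∀ v, v ∈ Aset (some c) → v ∈ Aset j → False := by
    rintro c (_ | c') hj v hv hv'
    · obtain ⟨⟨z1, hz1, hvz1⟩, hvx⟩ := hv
      obtain ⟨⟨z2, hz2, hvz2⟩, _⟩ := hv'
      have hnz2 : ¬ E.desc c.1 z2 := fun h => hz2 (c.2.1 ▸ RootedTD.desc_trans_parent h)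
      have := (E.sep hz1 hnz2 hvz1 hvz2).2
      rw [c.2.1] at this
      exact hvx this
    · obtain ⟨⟨z1, hz1, hvz1⟩, hvx⟩ := hv
      obtain ⟨⟨z2, hz2, hvz2⟩, _⟩ := hv'
      have hcc : c.1 ≠ c'.1 := fun h => hj (by rw [Subtype.ext h])
      have hnz2 : ¬ E.desc c.1 z2 := fun h =>
        E.desc_child_disjoint c.2.1 c.2.2 c'.2.1 c'.2.2 hcc h hz2
      have := (E.sep hz1 hnz2 hvz1 hvz2).2
      rw [c.2.1] at this
      exact hvx this
  have hdisj : ∀ i j : Option K, i ≠ j → ∀ v, v ∈ Aset i → v ∈ Aset j → False := by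
    rintro (_ | c) (_ | c') hij v hv hv'
    · exact hij rfl
    · exact hsome c' none (by simp) v hv' hv
    · exact hsome c none (by simp) v hv hv'
    · exact hsome c (some c') (by simpa [ne_comm] using hij) v hv hv'
  -- coverage
  have hcover : ∀ v : V, v ∉ E.bag x → ∃ i, v ∈ Aset i := by
    intro v hv
    obtain ⟨z, hz⟩ := E.vert_cover v
    by_cases hzx : E.desc x z
    · have hne : z ≠ x := by rintro rfl; exact hv hz
      have hex : ∃ n, E.parent^[n] z = x := hzx
      have hn := Nat.find_spec hex
      have hnpos : Nat.find hex ≠ 0 := by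
        intro h0; rw [h0] at hn; exact hne hn
      have hc1 : E.parent (E.parent^[Nat.find hex - 1] z) = x := by
        have hit := Function.iterate_succ_apply' E.parent (Nat.find hex - 1) z
        have hsucc : (Nat.find hex - 1).succ = Nat.find hex := by omega
        rw [← hit, hsucc]
        exact hn
      have hc2 : E.parent^[Nat.find hex - 1] z ≠ x :=
        Nat.find_min hex (show Nat.find hex - 1 < Nat.find hex by omega)
      exact ⟨some ⟨_, hc1, hc2⟩, ⟨⟨z, ⟨Nat.find hex - 1, rfl⟩, hz⟩, hv⟩⟩
    · exact ⟨none, ⟨⟨z, hzx, hz⟩, hv⟩⟩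
  -- no edges between distinct pieces
  have hedge : ∀ (c : K) (j : Option K), j ≠ some c →
      ∀ u v, u ∈ Aset (some c) → v ∈ Aset j → ¬ G.Adj u v := by
    intro c j hj u v hu hv hadj
    obtain ⟨w', hw'u, hw'v⟩ := E.edge_cover hadj
    by_cases hwc : E.desc c.1 w'
    · exact hdisj j (some c) hj v hv ⟨⟨w', hwc, hw'v⟩, hAnotbag j v hv⟩
    · obtain ⟨⟨y1, hy1, hy1v⟩, hux⟩ := hu
      have := (E.sep hy1 hwc hy1v hw'u).2
      rw [c.2.1] at this
      exact hux this
  have hedge' : ∀ i j : Option K, i ≠ j →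
      ∀ u v, u ∈ Aset i → v ∈ Aset j → ¬ G.Adj u v := by
    rintro (_ | c) (_ | c') hij u v hu hv hadj
    · exact hij rfl
    · exact hedge c' none (by simp) v u hv hu hadj.symm
    · exact hedge c none (by simp) u v hu hv hadj
    · exact hedge c (some c') (by simpa [ne_comm] using hij) u v hu hv hadj
  -- weights of pieces
  set wt : Option K → ℕ := fun i => (Aset i ∩ ↑B).ncard with hwt
  have hwt_some : ∀ c : K, 2 * wt (some c) ≤ B.card := by
    intro c
    have hsub : Aset (some c) ∩ ↑B ⊆
        ↑(B.filter (fun v => ∃ z, E.desc c.1 z ∧ v ∈ E.bag z)) := by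
      rintro v ⟨⟨⟨z, hz, hvz⟩, _⟩, hvB⟩
      simp only [Finset.coe_filter, Set.mem_setOf_eq]
      exact ⟨hvB, z, hz, hvz⟩
    have h1 : wt (some c) ≤ w c.1 := by
      rw [hwt]
      calc (Aset (some c) ∩ ↑B).ncard ≤ _ := Set.ncard_le_ncard hsub (Set.toFinite _)
        _ = w c.1 := by rw [Set.ncard_coe_finset, hw]
    have := hchild c.1 c.2.1 c.2.2
    omega
  have hwt_none : 2 * wt none ≤ B.card := by
    set Dx : Finset V := B.filter (fun v => ∃ z, E.desc x z ∧ v ∈ E.bag z) with hDx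
    have hsub : Aset none ∩ ↑B ⊆ ↑(B \ Dx) := by
      rintro v ⟨⟨⟨z1, hz1, hvz1⟩, hvx⟩, hvB⟩
      simp only [Finset.coe_sdiff, Set.mem_diff, Finset.mem_coe]
      refine ⟨hvB, ?_⟩
      intro hmem
      rw [hDx, Finset.mem_filter] at hmem
      obtain ⟨_, z2, hz2, hvz2⟩ := hmem
      exact hvx (E.sep hz2 hz1 hvz2 hvz1).1
    have h1 : wt none ≤ B.card - Dx.card := by
      rw [hwt]
      calc (Aset none ∩ ↑B).ncard ≤ _ := Set.ncard_le_ncard hsub (Set.toFinite _)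
        _ = (B \ Dx).card := Set.ncard_coe_finset _
        _ = B.card - Dx.card := Finset.card_sdiff_of_subset (Finset.filter_subset _ _)
    have h2 : Dx.card = w x := by rw [hDx, hw]
    have h3 : Dx.card ≤ B.card := Finset.card_le_card (Finset.filter_subset _ _)
    omega
  have hwt_all : ∀ i, 2 * wt i ≤ B.card := by
    rintro (_ | c)
    · exact hwt_none
    · exact hwt_some c
  -- total weight
  have hunion_ge : ∀ t : Finset (Option K),
      ∑ i ∈ t, wt i ≤ ((⋃ i ∈ t, Aset i) ∩ ↑B).ncard := by
    intro t
    induction t using Finset.induction_on with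
    | empty => simp
    | @insert a t ha ih =>
      rw [Finset.sum_insert ha]
      have heq : (⋃ i ∈ insert a t, Aset i) ∩ ↑B =
          (Aset a ∩ ↑B) ∪ ((⋃ i ∈ t, Aset i) ∩ ↑B) := by
        rw [Finset.set_biUnion_insert, Set.union_inter_distrib_right]
      have hwa : wt a = (Aset a ∩ ↑B).ncard := rfl
      rw [heq, Set.ncard_union_eq ?_ (Set.toFinite _) (Set.toFinite _)]
      · omega
      · rw [Set.disjoint_left]
        rintro v ⟨hv1, _⟩ ⟨hv2, _⟩
        simp only [Set.mem_iUnion] at hv2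
        obtain ⟨i, hi, hvi⟩ := hv2
        exact hdisj a i (by rintro rfl; exact ha hi) v hv1 hvi
  have hwt_total : ∑ i ∈ Finset.univ, wt i ≤ B.card := by
    calc ∑ i ∈ Finset.univ, wt i ≤ ((⋃ i ∈ Finset.univ, Aset i) ∩ ↑B).ncard :=
          hunion_ge _
      _ ≤ (↑B : Set V).ncard := Set.ncard_le_ncard (Set.inter_subset_right) (Set.toFinite _)
      _ = B.card := Set.ncard_coe_finset _
  -- binning
  obtain ⟨t0, t1, t2, hun, hd01, hd02, hd12, hb0, hb1, hb2⟩ :=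
    bins3 wt B.card Finset.univ (fun a _ => hwt_all a) hwt_total
  set tf : Fin 3 → Finset (Option K) := ![t0, t1, t2] with htf
  have hd10 := hd01.symm
  have hd20 := hd02.symm
  have hd21 := hd12.symm
  have htd : ∀ i j : Fin 3, i ≠ j → Disjoint (tf i) (tf j) := by
    intro i j hij
    fin_cases i <;> fin_cases j <;>
      first
        | exact absurd rfl hij
        | exact hd01 | exact hd02 | exact hd12
        | exact hd10 | exact hd20 | exact hd21
  have htb : ∀ i : Fin 3, 2 * ∑ a ∈ tf i, wt a ≤ B.card := by
    intro i
    fin_cases i <;> simpa [htf]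
  set C : Fin 3 → Set V := fun j => ⋃ i ∈ tf j, Aset i with hC
  refine ⟨C, S, ?_, ?_, ?_, ?_, ?_, ?_⟩
  · rw [hS, Set.ncard_coe_finset]; exact hE x
  · intro i j hij
    rw [Set.disjoint_left]
    intro v hv hv'
    rw [hC] at hv hv'
    simp only [Set.mem_iUnion] at hv hv'
    obtain ⟨a, ha, hva⟩ := hv
    obtain ⟨b, hb, hvb⟩ := hv'
    have hab : a ≠ b := by
      rintro rfl
      exact (Finset.disjoint_left.1 (htd i j hij) ha) hb
    exact hdisj a b hab v hva hvb
  · intro i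
    rw [Set.disjoint_left]
    intro v hv hvS
    rw [hC] at hv
    simp only [Set.mem_iUnion] at hv
    obtain ⟨a, _, hva⟩ := hv
    exact hAnotbag a v hva (by rwa [hS, Finset.mem_coe] at hvS)
  · ext v
    simp only [Set.mem_union, Set.mem_iUnion, Set.mem_univ, iff_true]
    by_cases hvx : v ∈ E.bag x
    · exact Or.inl (by rwa [hS, Finset.mem_coe])
    · obtain ⟨i, hi⟩ := hcover v hvx
      have : i ∈ t0 ∪ t1 ∪ t2 := by rw [hun]; exact Finset.mem_univ _
      rcases Finset.mem_union.1 this with h | h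
      · rcases Finset.mem_union.1 h with h | h
        · exact Or.inr ⟨0, by rw [hC]; exact Set.mem_biUnion h hi⟩
        · exact Or.inr ⟨1, by rw [hC]; exact Set.mem_biUnion h hi⟩
      · exact Or.inr ⟨2, by rw [hC]; exact Set.mem_biUnion h hi⟩
  · intro i j hij u hu v hv
    rw [hC] at hu hv
    simp only [Set.mem_iUnion] at hu hv
    obtain ⟨a, ha, hua⟩ := hu
    obtain ⟨b, hb, hvb⟩ := hv
    have hab : a ≠ b := by
      rintro rfl
      exact (Finset.disjoint_left.1 (htd i j hij) ha) hb
    exact hedge' a b hab u v hua hvb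
  · intro i
    have hle : (C i ∩ ↑B).ncard ≤ ∑ a ∈ tf i, wt a := by
      have hCsub : C i ∩ ↑B ⊆ ⋃ a ∈ tf i, (Aset a ∩ ↑B) := by
        rintro v ⟨hv, hvB⟩
        rw [hC] at hv
        simp only [Set.mem_iUnion] at hv ⊢
        obtain ⟨a, ha, hva⟩ := hv
        exact ⟨a, ha, hva, hvB⟩
      calc (C i ∩ ↑B).ncard ≤ (⋃ a ∈ tf i, (Aset a ∩ ↑B)).ncard :=
            Set.ncard_le_ncard hCsub (Set.toFinite _)
        _ ≤ ∑ a ∈ tf i, (Aset a ∩ ↑B).ncard := by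
            classical
            induction (tf i) using Finset.induction_on with
            | empty => simp
            | @insert a t ha ih =>
              rw [Finset.sum_insert ha, Finset.set_biUnion_insert]
              exact le_trans (Set.ncard_union_le _ _) (by omega)
        _ = ∑ a ∈ tf i, wt a := rfl
    have hSn : S.ncard ≤ k + 1 := by rw [hS, Set.ncard_coe_finset]; exact hE x
    have h2 := htb i
    omega
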